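/- Pointwise tilt bound: let Φ be weakly conformal at points x and y with conformal factors e^{λ(x)}, e^{λ(y)} and orthonormal frames e_i = e^{-λ}∂_{x_i}Φ. Then |e^{-2λ(y)} ∂₁Φ(y) ∧ ∂₂Φ(y) − e₁(x) ∧ e₂(x)|² e^{2λ(y)} ≤ 4 |∇Φ(x) − ∇Φ(y)|². -/

import Mathlib

/-!
Write `p = ⟪∂₁Φ(y), ∂₁Φ(x)⟫`, `q = ⟪∂₂Φ(y), ∂₂Φ(x)⟫`, `r = ⟪∂₁Φ(y), ∂₂Φ(x)⟫`,
`s = ⟪∂₂Φ(y), ∂₁Φ(x)⟫` and `a = e^{λ(x)}`, `b = e^{λ(y)}`. The left side is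
`2b² − 2(pq − rs)/a²` and the right side is `8(a² + b² − p − q)`. Bessel's inequality in the
orthogonal frame at `x` gives `p² + r² ≤ a²b²` and `s² + q² ≤ a²b²`, and with these
`a²/2` times the difference of the two sides is `(2a² − p − q)²` plus a sum of squares and
nonnegative multiples of the two Bessel defects.
-/

/-- Inner product of simple 2-vectors in `Λ²ℝᵐ`:
`⟨a∧b, c∧d⟩ = ⟨a,c⟩⟨b,d⟩ − ⟨a,d⟩⟨b,c⟩`. -/
noncomputable def wedgeInner {m : ℕ} (a b c d : EuclideanSpace ℝ (Fin m)) : ℝ :=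
  (inner ℝ a c : ℝ) * (inner ℝ b d : ℝ) - (inner ℝ a d : ℝ) * (inner ℝ b c : ℝ)

open RealInnerProductSpace

theorem inner_sq_add_inner_sq_le {E : Type*} [NormedAddCommGroup E] [InnerProductSpace ℝ E]
    (u a b : E) (e : ℝ)
    (ha : ‖a‖ = e) (hb : ‖b‖ = e) (hab : ⟪a, b⟫ = 0) :
    ⟪u, a⟫ ^ 2 + ⟪u, b⟫ ^ 2 ≤ ‖u‖ ^ 2 * e ^ 2 := by
  set t := ⟪u, a⟫ ^ 2 + ⟪u, b⟫ ^ 2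
  set w := ⟪u, a⟫ • a + ⟪u, b⟫ • b
  have hw : ⟪u, w⟫ = t := by
    simp only [w, t, inner_add_right, real_inner_smul_right]; ring
  have hww : ⟪w, w⟫ = t * e ^ 2 := by
    simp only [w, t, inner_add_left, inner_add_right, real_inner_smul_left, real_inner_smul_right]
    rw [real_inner_self_eq_norm_sq, real_inner_self_eq_norm_sq, ha, hb, real_inner_comm a b, hab]
    ring
  have cauchy_schwarz := real_inner_mul_inner_self_le u w
  rw [hw, hww, real_inner_self_eq_norm_sq] at cauchy_schwarz
  rcases (by positivity : (0 : ℝ) ≤ t).eq_or_lt with ht | ht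
  · rw [← ht]; positivity
  · nlinarith

theorem wedgeInner_self {m : ℕ} (a b : EuclideanSpace ℝ (Fin m)) :
    wedgeInner a b a b = ‖a‖ ^ 2 * ‖b‖ ^ 2 - ⟪a, b⟫ ^ 2 := by
  rw [wedgeInner, real_inner_self_eq_norm_sq, real_inner_self_eq_norm_sq, real_inner_comm b a]
  ring

theorem tilt_bound_of_bessel {a b p q r s : ℝ} (ha : 0 < a) (hb : 0 < b)
    (hpr : p ^ 2 + r ^ 2 ≤ b ^ 2 * a ^ 2) (hsq : s ^ 2 + q ^ 2 ≤ b ^ 2 * a ^ 2) :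
    ((b ^ 2)⁻¹ ^ 2 * (b ^ 2 * b ^ 2) - 2 * (b ^ 2)⁻¹ * (a ^ 2)⁻¹ * (p * q - r * s)
        + (a ^ 2)⁻¹ ^ 2 * (a ^ 2 * a ^ 2)) * b ^ 2
      ≤ 4 * ((a ^ 2 - 2 * p + b ^ 2) + (a ^ 2 - 2 * q + b ^ 2)) := by
  have hnonneg : 0 ≤ 4 * a ^ 4 + 3 * a ^ 2 * b ^ 2 - 4 * a ^ 2 * (p + q) + p * q - r * s := by
    nlinarith [sq_nonneg (2 * a ^ 2 - p - q), sq_nonneg (r - s), sq_nonneg (p - q),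
      sq_nonneg r, sq_nonneg s]
  have hdiff : 4 * ((a ^ 2 - 2 * p + b ^ 2) + (a ^ 2 - 2 * q + b ^ 2))
      - ((b ^ 2)⁻¹ ^ 2 * (b ^ 2 * b ^ 2) - 2 * (b ^ 2)⁻¹ * (a ^ 2)⁻¹ * (p * q - r * s)
        + (a ^ 2)⁻¹ ^ 2 * (a ^ 2 * a ^ 2)) * b ^ 2
      = 2 * (4 * a ^ 4 + 3 * a ^ 2 * b ^ 2 - 4 * a ^ 2 * (p + q) + p * q - r * s) / a ^ 2 := by
    field_simp
    ring
  have : 0 ≤ 2 * (4 * a ^ 4 + 3 * a ^ 2 * b ^ 2 - 4 * a ^ 2 * (p + q) + p * q - r * s) / a ^ 2 := by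
    positivity
  linarith

/-- pointwise tilt bound: for a map weakly conformal at `x` and `y`,
`|e^{−2λ(y)} ∂₁Φ(y)∧∂₂Φ(y) − e₁(x)∧e₂(x)|² e^{2λ(y)} ≤ 4|∇Φ(x) − ∇Φ(y)|²`,
with the squared norm in `Λ²ℝᵐ` expanded by the Gram identity. -/
theorem stmt9 (m : ℕ) (d1x d2x d1y d2y : EuclideanSpace ℝ (Fin m)) (ex ey : ℝ)
    (hex : 0 < ex) (hey : 0 < ey)
    (hx1 : ‖d1x‖ = ex) (hx2 : ‖d2x‖ = ex) (hx3 : (inner ℝ d1x d2x : ℝ) = 0)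
    (hy1 : ‖d1y‖ = ey) (hy2 : ‖d2y‖ = ey) (hy3 : (inner ℝ d1y d2y : ℝ) = 0) :
    ((ey ^ 2)⁻¹ ^ 2 * wedgeInner d1y d2y d1y d2y
        - 2 * (ey ^ 2)⁻¹ * (ex ^ 2)⁻¹ * wedgeInner d1y d2y d1x d2x
        + (ex ^ 2)⁻¹ ^ 2 * wedgeInner d1x d2x d1x d2x) * ey ^ 2
      ≤ 4 * (‖d1x - d1y‖ ^ 2 + ‖d2x - d2y‖ ^ 2) := by
  have hpr := inner_sq_add_inner_sq_le d1y d1x d2x ex hx1 hx2 hx3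
  have hsq := inner_sq_add_inner_sq_le d2y d1x d2x ex hx1 hx2 hx3
  rw [hy1] at hpr
  rw [hy2] at hsq
  rw [wedgeInner_self, wedgeInner_self, hx1, hx2, hx3, hy1, hy2, hy3, norm_sub_sq_real,
    norm_sub_sq_real, hx1, hx2, hy1, hy2, real_inner_comm d1y d1x, real_inner_comm d2y d2x, wedgeInner]
  simpa using tilt_bound_of_bessel hex hey hpr hsq
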